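/- If r ∈ A is lex-optimal and K(r) ≥ 2, then: the lowest-ratio level set L_1(r) is an independent set in G; the highest-ratio level set L_{K(r)}(r) equals the set of all neighbors of nodes of L_1(r) in G; the extreme ratios satisfy v_1(r) · v_{K(r)}(r) = 1; and Σ_{i∈L_1(r)} r_i = Σ_{i∈L_{K(r)}(r)} D_i. -/

import Mathlib

open Finset
open scoped Classical

noncomputable section

namespace SharingEcon

variable {V : Type*} [Fintype V] [DecidableEq V]

/-- The set of neighbors of a set of nodes: `N_S = ⋃ i ∈ S, N_i`. -/
def nbrs (G : SimpleGraph V) [DecidableRel G.Adj] (S : Finset V) : Finset V :=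
  S.biUnion fun i => G.neighborFinset i

/-- The set function `f(S) = ∑_{j ∈ N_S} D_j`. -/
def fS (G : SimpleGraph V) [DecidableRel G.Adj] (D : V → ℝ) (S : Finset V) : ℝ :=
  ∑ j ∈ nbrs G S, D j

/-- The polymatroid polyhedron `A` of a set function `f`. -/
def polyA (f : Finset V → ℝ) : Set (V → ℝ) :=
  {r | (∀ i, 0 ≤ r i) ∧ ∀ S : Finset V, ∑ i ∈ S, r i ≤ f S}

/-- The base `A₀` of the polymatroid. -/
def polyBase (f : Finset V → ℝ) : Set (V → ℝ) :=
  {r | r ∈ polyA f ∧ ∑ i, r i = f Finset.univ}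

/-- The coordinates of a vector sorted in nondecreasing order. -/
def sortedVec (x : V → ℝ) : List ℝ :=
  (Finset.univ.val.map x).sort (· ≤ ·)

/-- `x` is lexicographically at least `y` (comparing sorted coordinate vectors). -/
def lexGE (x y : V → ℝ) : Prop :=
  sortedVec x = sortedVec y ∨
    ∃ k : ℕ, (∀ j < k, (sortedVec x).getD j 0 = (sortedVec y).getD j 0) ∧
      (sortedVec y).getD k 0 < (sortedVec x).getD k 0

/-- `r` is lexicographically optimal in `A` for the sharing-ratio vectors `(r i / D i)`. -/
def LexOptimal (A : Set (V → ℝ)) (D : V → ℝ) (r : V → ℝ) : Prop :=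
  r ∈ A ∧ ∀ r' ∈ A, lexGE (fun i => r i / D i) (fun i => r' i / D i)

/-- The sharing ratio of node `i`. -/
def ratio (D r : V → ℝ) (i : V) : ℝ := r i / D i

/-- The distinct values of the sharing ratios, sorted increasingly. -/
def vals (D r : V → ℝ) : List ℝ :=
  (Finset.univ.image (ratio D r)).sort (· ≤ ·)

/-- The number `K(r)` of distinct sharing-ratio values. -/
def numLevels (D r : V → ℝ) : ℕ := (vals D r).length

/-- The `k`-th smallest distinct ratio value `v_k(r)` (1-indexed). -/
def v (D r : V → ℝ) (k : ℕ) : ℝ := (vals D r).getD (k - 1) 0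

/-- The `k`-th level set `L_k(r)` (1-indexed). -/
def level (D r : V → ℝ) (k : ℕ) : Finset V :=
  Finset.univ.filter fun i => ratio D r i = v D r k

end SharingEcon

/-!
Lex-optimality forces every node `i` into a tight set (one with `r(S) = f(S)`) that avoids all
nodes of strictly larger ratio: otherwise shifting a little mass from those nodes to `i` stays
in `A` and lexicographically increases the sorted ratio vector. As `f` is submodular, tight
sets are closed under union, so `L₁`, the complement of `L_K`, and the whole node set are tight.

Write `a = v₁`, `b = v_K`, `B = L₁`, `T = L_K` and let `W` be the set of nodes all of whose
neighbours lie in `T`. Tightness gives `D(N_B) = a D(B)` and `D(W) = b D(T)`, while every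
`r ∈ A` with `r(N) = D(N)` satisfies `r(W) ≤ D(T)` and `D(B) ≤ r(N_B)`. Hence
`D(B) ≤ r(N_B) ≤ b D(N_B) = ab D(B)` and `ab D(T) = a D(W) ≤ r(W) ≤ D(T)`, so `ab = 1`;
the equality cases give `N_B ⊆ T` and `W ⊆ B`, and comparing `D`-masses then gives `T = N_B`.
-/

open Filter Topology

namespace SharingEcon

def LexLT (l l' : List ℝ) : Prop :=
  ∃ k, (∀ j < k, l.getD j 0 = l'.getD j 0) ∧ l.getD k 0 < l'.getD k 0

namespace LexLT

variable {l l' : List ℝ}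

theorem cons (a : ℝ) (h : LexLT l l') : LexLT (a :: l) (a :: l') := by
  obtain ⟨k, hpre, hk⟩ := h
  refine ⟨k + 1, fun j hj => ?_, by simpa using hk⟩
  cases j with
  | zero => rfl
  | succ j => simpa using hpre j (by omega)

theorem append_left (A : List ℝ) (h : LexLT l l') : LexLT (A ++ l) (A ++ l') := by
  induction A with
  | nil => exact h
  | cons a A ih => exact ih.cons a

theorem replicate_append {a : ℝ} {n n' : ℕ} (hn : n' < n) (B : List ℝ) {B' : List ℝ}
    (hB' : ∀ b ∈ B', a < b) (hne : B' ≠ []) :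
    LexLT (List.replicate n a ++ B) (List.replicate n' a ++ B') := by
  obtain ⟨m, rfl⟩ := Nat.exists_eq_add_of_lt hn
  induction n' with
  | zero =>
    obtain ⟨b, B', rfl⟩ := List.exists_cons_of_ne_nil hne
    exact ⟨0, by simp, by simpa [List.replicate_succ] using hB' b (by simp)⟩
  | succ n' ih =>
    simpa [List.replicate_succ, Nat.add_right_comm n' m] using (ih (by omega)).cons a

end LexLT

theorem not_lexGE_of_lexLT {V : Type*} [Fintype V] {x y : V → ℝ}
    (h : LexLT (sortedVec x) (sortedVec y)) : ¬ lexGE x y := by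
  obtain ⟨k, hpre, hk⟩ := h
  rintro (heq | ⟨m, hpre', hm⟩)
  · exact hk.ne (by rw [heq])
  · rcases lt_trichotomy k m with hkm | rfl | hmk
    · exact hk.ne (hpre' k hkm)
    · exact hk.not_gt hm
    · exact hm.ne (hpre m hmk).symm

theorem _root_.Multiset.sort_eq_filter_lt_append (s : Multiset ℝ) (a : ℝ) :
    s.sort = (s.filter (· < a)).sort ++
      (List.replicate (s.count a) a ++ (s.filter (a < ·)).sort) := by
  have hperm : (((s.filter (· < a)).sort ++
      (List.replicate (s.count a) a ++ (s.filter (a < ·)).sort) : List ℝ) : Multiset ℝ) = s := by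
    ext b
    simp only [← Multiset.coe_add, Multiset.sort_eq, Multiset.coe_replicate, Multiset.count_add,
      Multiset.count_filter, Multiset.count_replicate]
    rcases lt_trichotomy b a with h | rfl | h
    · simp [h, h.not_gt, h.ne']
    · simp
    · simp [h, h.not_gt, h.ne]
  refine List.Perm.eq_of_pairwise' (r := (· ≤ ·)) (Multiset.pairwise_sort _ _) ?_
    (Quotient.exact (hperm.trans (Multiset.sort_eq s _).symm)).symm
  simp only [List.pairwise_append, Multiset.pairwise_sort, List.pairwise_replicate, le_refl,
    Multiset.mem_sort, Multiset.mem_filter, List.mem_append, List.mem_replicate]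
  refine ⟨trivial, ⟨.inr trivial, trivial, fun _ h b hb => h.2 ▸ hb.2.le⟩, fun c hc b hb => ?_⟩
  rcases hb with ⟨-, rfl⟩ | ⟨-, hb⟩
  exacts [hc.2.le, (hc.2.trans hb).le]

theorem lexLT_sort_of_count_lt {s s' : Multiset ℝ} (a : ℝ)
    (hcard : Multiset.card s = Multiset.card s') (hlow : s.filter (· < a) = s'.filter (· < a))
    (hcount : s'.count a < s.count a) :
    LexLT s.sort s'.sort := by
  rw [s.sort_eq_filter_lt_append a, s'.sort_eq_filter_lt_append a, hlow]
  refine .append_left _ (.replicate_append hcount _ (fun b hb => ?_) ?_)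
  · exact (Multiset.mem_filter.1 ((Multiset.mem_sort _).1 hb)).2
  · have hlen := congrArg List.length (s.sort_eq_filter_lt_append a)
    have hlen' := congrArg List.length (s'.sort_eq_filter_lt_append a)
    simp only [List.length_append, List.length_replicate, Multiset.length_sort, hlow] at hlen hlen'
    rw [← List.length_pos_iff_ne_nil, Multiset.length_sort]
    omega

theorem lexLT_sortedVec_of_raise {V : Type*} [Fintype V] {x x' : V → ℝ} {T : Finset V} {i : V}
    (hi : i ∈ T) (hout : ∀ k ∉ T, x' k = x k) (hx' : ∀ k ∈ T, x i < x' k)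
    (hx : ∀ k ∈ T, k ≠ i → x i < x k) : LexLT (sortedVec x) (sortedVec x') := by
  have hlow : ∀ k, x k < x i ↔ x' k < x i := fun k => by
    by_cases hk : k ∈ T
    · by_cases hki : k = i
      · subst hki; simp [(hx' k hk).not_gt]
      · simp [(hx k hk hki).not_gt, (hx' k hk).not_gt]
    · rw [hout k hk]
  -- below `x i` the two value multisets agree, and `x'` takes the value `x i` once less
  refine lexLT_sort_of_count_lt (x i) (by simp) ?_ ?_
  · rw [Multiset.filter_map, Multiset.filter_map]
    refine Multiset.map_congr (Multiset.filter_congr fun k _ => hlow k) fun k hk => ?_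
    have hkT : k ∉ T := fun hkT => (hx' k hkT).not_gt (Multiset.mem_filter.1 hk).2
    exact (hout k hkT).symm
  · have hsub : univ.filter (fun k => x i = x' k) ⊂ univ.filter (fun k => x i = x k) := by
      refine Finset.ssubset_iff_of_subset (fun k hk => ?_) |>.2 ⟨i, by simp, ?_⟩
      · have hk := (Finset.mem_filter.1 hk).2
        have hkT : k ∉ T := fun hkT => (hx' k hkT).ne hk
        simpa [← hout k hkT] using hk
      · simpa using (hx' i hi).ne
    simpa [Multiset.count_map, ← Finset.filter_val] using Finset.card_lt_card hsub

section Polymatroid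

variable {V : Type*} [DecidableEq V]

def IsTight (f : Finset V → ℝ) (r : V → ℝ) (S : Finset V) : Prop :=
  ∑ i ∈ S, r i = f S

def IsSubmodular (f : Finset V → ℝ) : Prop :=
  ∀ S T, f (S ∪ T) + f (S ∩ T) ≤ f S + f T

variable {f : Finset V → ℝ} {r D : V → ℝ}

theorem IsTight.union (hf : IsSubmodular f) (hr : r ∈ polyA f) {S T : Finset V}
    (hS : IsTight f r S) (hT : IsTight f r T) : IsTight f r (S ∪ T) := by
  have hsum : ∑ i ∈ S ∪ T, r i + ∑ i ∈ S ∩ T, r i = ∑ i ∈ S, r i + ∑ i ∈ T, r i :=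
    Finset.sum_union_inter
  unfold IsTight at *
  linarith [hr.2 (S ∪ T), hr.2 (S ∩ T), hf S T]

theorem isTight_of_forall_mem (hf0 : f ∅ = 0) (hf : IsSubmodular f) (hr : r ∈ polyA f)
    {W : Finset V} (h : ∀ i ∈ W, ∃ S ⊆ W, i ∈ S ∧ IsTight f r S) : IsTight f r W := by
  choose! S hSW hiS hS using h
  have hW : W.sup S = W :=
    le_antisymm (Finset.sup_le hSW) fun i hi => Finset.mem_sup.2 ⟨i, hi, hiS i hi⟩
  rw [← hW]
  exact Finset.sup_induction (by simp [IsTight, hf0]) (fun _ h₁ _ h₂ => h₁.union hf hr h₂) hS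

def transfer (r : V → ℝ) (i : V) (J : Finset V) (ε : ℝ) : V → ℝ :=
  fun k => r k + (if k = i then ε else 0) - (if k ∈ J then ε else 0)

variable {i : V} {J : Finset V} {ε : ℝ}

theorem sum_transfer (S : Finset V) :
    ∑ k ∈ S, transfer r i J ε k = ∑ k ∈ S, r k + (if i ∈ S then ε else 0) - #(S ∩ J) * ε := by
  simp [transfer, Finset.sum_add_distrib, Finset.sum_sub_distrib, Finset.sum_ite_mem]

theorem transfer_mem_polyA (hr : r ∈ polyA f) (hε : 0 ≤ ε) (hJ : ∀ j ∈ J, ε ≤ r j)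
    (hslack : ∀ S : Finset V, i ∈ S → Disjoint S J → ∑ k ∈ S, r k + ε ≤ f S) :
    transfer r i J ε ∈ polyA f := by
  refine ⟨fun k => ?_, fun S => ?_⟩
  · have := hr.1 k
    by_cases hk : k ∈ J
    · have := hJ k hk
      simp only [transfer, hk, if_true]
      split_ifs <;> linarith
    · simp only [transfer, hk, if_false]
      split_ifs <;> linarith
  · rw [sum_transfer]
    have hS := hr.2 S
    by_cases hiS : i ∈ S
    · by_cases hSJ : Disjoint S J
      · simp [hiS, Finset.disjoint_iff_inter_eq_empty.1 hSJ, hslack S hiS hSJ]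
      · have : (1 : ℝ) ≤ #(S ∩ J) := by
          exact_mod_cast Finset.card_pos.2 (Finset.not_disjoint_iff_nonempty_inter.1 hSJ)
        simp only [hiS, if_true]
        nlinarith
    · simp only [hiS, if_false]
      nlinarith [(Nat.cast_nonneg _ : (0 : ℝ) ≤ #(S ∩ J))]

theorem lexLT_transfer [Fintype V] (hD : ∀ k, 0 < D k) (hε : 0 < ε)
    (hJ : ∀ j ∈ J, ratio D r i < ratio D r j)
    (hεJ : ∀ j ∈ J, ε < r j - ratio D r i * D j) :
    LexLT (sortedVec (ratio D r)) (sortedVec (ratio D (transfer r i J ε))) := by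
  have hiJ : i ∉ J := fun hi => (hJ i hi).false
  refine lexLT_sortedVec_of_raise (T := insert i J) (mem_insert_self i J) (fun k hk => ?_)
    (fun k hk => ?_) (fun k hk hki => hJ k ((mem_insert.1 hk).resolve_left hki))
  · simp only [mem_insert, not_or] at hk
    simp [ratio, transfer, hk.1, hk.2]
  · rcases mem_insert.1 hk with rfl | hkJ
    · simp only [ratio, transfer, hiJ, if_true, if_false]
      exact div_lt_div_of_pos_right (by linarith) (hD k)
    · have hki : k ≠ i := fun h => hiJ (h ▸ hkJ)
      have hlt : ratio D r i * D k < r k - ε := by linarith [hεJ k hkJ]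
      simpa [ratio, transfer, hki, hkJ, lt_div_iff₀ (hD k)] using hlt

theorem LexOptimal.exists_isTight [Fintype V] (hD : ∀ k, 0 < D k)
    (hlex : LexOptimal (polyA f) D r) (i : V) (hJ : ∀ j ∈ J, ratio D r i < ratio D r j) :
    ∃ S, i ∈ S ∧ Disjoint S J ∧ IsTight f r S := by
  by_contra! hnot
  obtain ⟨hr, hopt⟩ := hlex
  have hsmall : ∀ c > 0, ∀ᶠ ε in 𝓝[>] (0 : ℝ), ε < c :=
    fun c hc => nhdsWithin_le_nhds (eventually_lt_nhds hc)
  have hev : ∀ᶠ ε in 𝓝[>] (0 : ℝ), 0 < ε ∧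
      (∀ S : Finset V, i ∈ S → Disjoint S J → ε < f S - ∑ k ∈ S, r k) ∧
      ∀ j ∈ J, ε < r j - ratio D r i * D j := by
    refine eventually_mem_nhdsWithin.and (.and (Filter.eventually_all.2 fun S => ?_) ?_)
    · simp only [Filter.eventually_imp_distrib_left]
      exact fun hiS hSJ => hsmall _ (sub_pos.2 ((hr.2 S).lt_of_ne (hnot S hiS hSJ)))
    · exact (Filter.eventually_all_finset J).2 fun j hj =>
        hsmall _ (sub_pos.2 ((lt_div_iff₀ (hD j)).1 (hJ j hj)))
  obtain ⟨ε, hε, hεS, hεJ⟩ := hev.exists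
  refine not_lexGE_of_lexLT (lexLT_transfer hD hε hJ hεJ) (hopt _ (transfer_mem_polyA hr hε.le
    (fun j hj => ?_) fun S hiS hSJ => by linarith [hεS S hiS hSJ]))
  have hρ : 0 ≤ ratio D r i := div_nonneg (hr.1 i) (hD i).le
  linarith [hεJ j hj, mul_nonneg hρ (hD j).le]

theorem LexOptimal.isTight_of_ratio_le_mem [Fintype V] (hf0 : f ∅ = 0) (hf : IsSubmodular f)
    (hD : ∀ k, 0 < D k) (hlex : LexOptimal (polyA f) D r) {W : Finset V}
    (hW : ∀ i ∈ W, ∀ k, ratio D r k ≤ ratio D r i → k ∈ W) : IsTight f r W := by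
  refine isTight_of_forall_mem hf0 hf hlex.1 fun i hi => ?_
  obtain ⟨S, hiS, hSJ, hS⟩ := hlex.exists_isTight hD i
    (J := univ.filter fun j => ratio D r i < ratio D r j) (fun j hj => (mem_filter.1 hj).2)
  refine ⟨S, fun k hk => hW i hi k ?_, hiS, hS⟩
  by_contra! hlt
  exact Finset.disjoint_left.1 hSJ hk (by simpa using hlt)

end Polymatroid

section Ratio

variable {V : Type*} {D r : V → ℝ}

theorem eq_of_subset_of_sum_le (hD : ∀ i, 0 < D i) {S T : Finset V} (hST : S ⊆ T)
    (hsum : ∑ i ∈ T, D i ≤ ∑ i ∈ S, D i) : S = T := by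
  by_contra hne
  obtain ⟨i, hiT, hiS⟩ := Finset.exists_of_ssubset (hST.ssubset_of_ne hne)
  exact (Finset.sum_lt_sum_of_subset hST hiT hiS (hD i) fun j _ _ => (hD j).le).not_ge hsum

theorem ratio_le_iff (hD : ∀ i, 0 < D i) {i : V} {c : ℝ} : ratio D r i ≤ c ↔ r i ≤ c * D i :=
  div_le_iff₀ (hD i)

theorem le_ratio_iff (hD : ∀ i, 0 < D i) {i : V} {c : ℝ} : c ≤ ratio D r i ↔ c * D i ≤ r i :=
  le_div_iff₀ (hD i)

variable {S : Finset V} {c : ℝ}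

theorem sum_le_mul_sum_of_ratio_le (hD : ∀ i, 0 < D i) (h : ∀ i ∈ S, ratio D r i ≤ c) :
    ∑ i ∈ S, r i ≤ c * ∑ i ∈ S, D i := by
  rw [Finset.mul_sum]
  exact Finset.sum_le_sum fun i hi => (ratio_le_iff hD).1 (h i hi)

theorem mul_sum_le_sum_of_le_ratio (hD : ∀ i, 0 < D i) (h : ∀ i ∈ S, c ≤ ratio D r i) :
    c * ∑ i ∈ S, D i ≤ ∑ i ∈ S, r i := by
  rw [Finset.mul_sum]
  exact Finset.sum_le_sum fun i hi => (le_ratio_iff hD).1 (h i hi)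

theorem ratio_eq_of_ratio_le_of_mul_sum_le (hD : ∀ i, 0 < D i) (h : ∀ i ∈ S, ratio D r i ≤ c)
    (hsum : c * ∑ i ∈ S, D i ≤ ∑ i ∈ S, r i) : ∀ i ∈ S, ratio D r i = c := by
  have hle : ∀ i ∈ S, r i ≤ c * D i := fun i hi => (ratio_le_iff hD).1 (h i hi)
  have heq := (Finset.sum_eq_sum_iff_of_le hle).1
    ((Finset.sum_le_sum hle).antisymm (by rwa [← Finset.mul_sum]))
  exact fun i hi => (div_eq_iff (hD i).ne').2 (heq i hi)

theorem ratio_eq_of_le_ratio_of_sum_le_mul (hD : ∀ i, 0 < D i) (h : ∀ i ∈ S, c ≤ ratio D r i)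
    (hsum : ∑ i ∈ S, r i ≤ c * ∑ i ∈ S, D i) : ∀ i ∈ S, ratio D r i = c := by
  have hle : ∀ i ∈ S, c * D i ≤ r i := fun i hi => (le_ratio_iff hD).1 (h i hi)
  have heq := (Finset.sum_eq_sum_iff_of_le hle).1
    ((Finset.sum_le_sum hle).antisymm (by rwa [← Finset.mul_sum]))
  exact fun i hi => (div_eq_iff (hD i).ne').2 (heq i hi).symm

end Ratio

section Levels

variable {V : Type*} [Fintype V] {D r : V → ℝ}

theorem mem_level {k : ℕ} {i : V} : i ∈ level D r k ↔ ratio D r i = v D r k := by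
  simp [level]

theorem numLevels_eq_card : numLevels D r = #(univ.image (ratio D r)) :=
  Finset.length_sort _

theorem v_one_eq_min' (hne : (univ.image (ratio D r)).Nonempty) :
    v D r 1 = (univ.image (ratio D r)).min' hne := by
  have h : 0 < (vals D r).length := by rw [← numLevels, numLevels_eq_card]; exact card_pos.2 hne
  rw [v, Nat.sub_self, List.getD_eq_getElem _ _ h]
  exact Finset.sorted_zero_eq_min'

theorem v_numLevels_eq_max' (hne : (univ.image (ratio D r)).Nonempty) :
    v D r (numLevels D r) = (univ.image (ratio D r)).max' hne := by
  have h : numLevels D r - 1 < (vals D r).length := by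
    have := numLevels_eq_card (D := D) (r := r) ▸ card_pos.2 hne
    rw [← numLevels]; omega
  rw [v, List.getD_eq_getElem _ _ h]
  exact Finset.sorted_last_eq_max'

theorem image_ratio_nonempty (i : V) : (univ.image (ratio D r)).Nonempty :=
  ⟨_, mem_image_of_mem _ (mem_univ i)⟩

theorem v_one_le_ratio (i : V) : v D r 1 ≤ ratio D r i := by
  rw [v_one_eq_min' (image_ratio_nonempty i)]
  exact min'_le _ _ (mem_image_of_mem _ (mem_univ i))

theorem ratio_le_v_numLevels (i : V) : ratio D r i ≤ v D r (numLevels D r) := by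
  rw [v_numLevels_eq_max' (image_ratio_nonempty i)]
  exact le_max' _ _ (mem_image_of_mem _ (mem_univ i))

theorem level_one_nonempty [Nonempty V] : (level D r 1).Nonempty := by
  have hne := image_ratio_nonempty (D := D) (r := r) (Classical.arbitrary V)
  obtain ⟨i, -, hi⟩ := mem_image.1 (min'_mem _ hne)
  exact ⟨i, mem_level.2 (by rw [hi, v_one_eq_min' hne])⟩

theorem level_numLevels_nonempty [Nonempty V] : (level D r (numLevels D r)).Nonempty := by
  have hne := image_ratio_nonempty (D := D) (r := r) (Classical.arbitrary V)
  obtain ⟨i, -, hi⟩ := mem_image.1 (max'_mem _ hne)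
  exact ⟨i, mem_level.2 (by rw [hi, v_numLevels_eq_max' hne])⟩

theorem nonempty_of_two_le_numLevels (hK : 2 ≤ numLevels D r) : Nonempty V := by
  rw [numLevels_eq_card] at hK
  obtain ⟨x, hx⟩ := card_pos.1 (by omega : 0 < #(univ.image (ratio D r)))
  obtain ⟨i, -, -⟩ := mem_image.1 hx
  exact ⟨i⟩

theorem v_one_lt_v_numLevels (hK : 2 ≤ numLevels D r) : v D r 1 < v D r (numLevels D r) := by
  have := nonempty_of_two_le_numLevels hK
  have hne := image_ratio_nonempty (D := D) (r := r) (Classical.arbitrary V)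
  rw [v_one_eq_min' hne, v_numLevels_eq_max' hne]
  exact min'_lt_max'_of_card _ (numLevels_eq_card (D := D) ▸ hK)

theorem sum_level (hD : ∀ i, 0 < D i) (k : ℕ) :
    ∑ i ∈ level D r k, r i = v D r k * ∑ i ∈ level D r k, D i := by
  rw [mul_sum]
  exact sum_congr rfl fun i hi => by rw [← mem_level.1 hi, ratio, div_mul_cancel₀ _ (hD i).ne']

theorem v_one_nonneg [Nonempty V] (hD : ∀ i, 0 < D i) (hr : ∀ i, 0 ≤ r i) : 0 ≤ v D r 1 := by
  obtain ⟨i, hi⟩ := level_one_nonempty (D := D) (r := r)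
  rw [← mem_level.1 hi]
  exact div_nonneg (hr i) (hD i).le

end Levels

section Graph

variable {V : Type*} [Fintype V] [DecidableEq V] {G : SimpleGraph V} [DecidableRel G.Adj]
  {D r : V → ℝ}

theorem mem_nbrs {S : Finset V} {j : V} : j ∈ nbrs G S ↔ ∃ i ∈ S, G.Adj i j := by
  simp [nbrs]

theorem nbrs_univ (hniso : ∀ i, (G.neighborFinset i).Nonempty) : nbrs G univ = univ := by
  refine eq_univ_of_forall fun j => mem_nbrs.2 ?_
  obtain ⟨i, hi⟩ := hniso j
  exact ⟨i, mem_univ i, ((G.mem_neighborFinset j i).1 hi).symm⟩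

-- the nodes all of whose neighbours lie in `T`
def coNbrs (G : SimpleGraph V) [DecidableRel G.Adj] (T : Finset V) : Finset V :=
  (nbrs G Tᶜ)ᶜ

theorem nbrs_coNbrs_subset (T : Finset V) : nbrs G (coNbrs G T) ⊆ T := by
  intro j hj
  obtain ⟨i, hi, hij⟩ := mem_nbrs.1 hj
  by_contra hjT
  exact mem_compl.1 hi (mem_nbrs.2 ⟨j, mem_compl.2 hjT, hij.symm⟩)

theorem fS_empty : fS G D ∅ = 0 := by
  simp [fS, nbrs]

theorem isSubmodular_fS (hD : ∀ i, 0 ≤ D i) : IsSubmodular (fS G D) := by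
  intro S T
  have hinter : nbrs G (S ∩ T) ⊆ nbrs G S ∩ nbrs G T :=
    subset_inter (biUnion_subset_biUnion_of_subset_left _ inter_subset_left)
      (biUnion_subset_biUnion_of_subset_left _ inter_subset_right)
  have hunion : nbrs G (S ∪ T) = nbrs G S ∪ nbrs G T := union_biUnion
  simp only [fS, hunion]
  linarith [sum_union_inter (s₁ := nbrs G S) (s₂ := nbrs G T) (f := D),
    sum_le_sum_of_subset_of_nonneg hinter fun i _ _ => hD i]

theorem sum_coNbrs_le (hD : ∀ i, 0 ≤ D i) (hr : r ∈ polyA (fS G D)) (T : Finset V) :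
    ∑ i ∈ coNbrs G T, r i ≤ ∑ i ∈ T, D i :=
  (hr.2 _).trans (sum_le_sum_of_subset_of_nonneg (nbrs_coNbrs_subset T) fun i _ _ => hD i)

theorem sum_le_sum_nbrs (hD : ∀ i, 0 ≤ D i) (hr : r ∈ polyA (fS G D))
    (htot : ∑ i, r i = ∑ i, D i) (S : Finset V) : ∑ i ∈ S, D i ≤ ∑ i ∈ nbrs G S, r i := by
  have h := sum_coNbrs_le hD hr Sᶜ
  rw [coNbrs, compl_compl] at h
  rw [← sum_compl_add_sum (nbrs G S) r, ← sum_compl_add_sum S D] at htot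
  linarith

theorem IsTight.sum_eq_sum_coNbrs (htot : ∑ i, r i = ∑ i, D i) {T : Finset V}
    (hT : IsTight (fS G D) r Tᶜ) : ∑ i ∈ T, r i = ∑ i ∈ coNbrs G T, D i := by
  rw [← sum_compl_add_sum Tᶜ r, compl_compl, ← sum_compl_add_sum (nbrs G Tᶜ) D] at htot
  rw [IsTight, fS] at hT
  rw [coNbrs]
  linarith

theorem LexOptimal.isTight_level_one (hD : ∀ i, 0 < D i)
    (hlex : LexOptimal (polyA (fS G D)) D r) : IsTight (fS G D) r (level D r 1) :=
  hlex.isTight_of_ratio_le_mem fS_empty (isSubmodular_fS fun i => (hD i).le) hD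
    fun _ hi k hk => mem_level.2 ((hk.trans_eq (mem_level.1 hi)).antisymm (v_one_le_ratio k))

theorem LexOptimal.isTight_compl_level_numLevels (hD : ∀ i, 0 < D i)
    (hlex : LexOptimal (polyA (fS G D)) D r) : IsTight (fS G D) r (level D r (numLevels D r))ᶜ :=
  hlex.isTight_of_ratio_le_mem fS_empty (isSubmodular_fS fun i => (hD i).le) hD
    fun i hi k hk => by
      simp only [mem_compl, mem_level] at hi ⊢
      exact fun hkK => hi ((ratio_le_v_numLevels i).antisymm (hkK ▸ hk))

theorem LexOptimal.sum_eq_sum (hniso : ∀ i, (G.neighborFinset i).Nonempty) (hD : ∀ i, 0 < D i)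
    (hlex : LexOptimal (polyA (fS G D)) D r) : ∑ i, r i = ∑ i, D i := by
  have huniv : IsTight (fS G D) r univ :=
    hlex.isTight_of_ratio_le_mem fS_empty (isSubmodular_fS fun i => (hD i).le) hD
      fun _ _ k _ => mem_univ k
  rwa [IsTight, fS, nbrs_univ hniso] at huniv

theorem LexOptimal.sum_nbrs_level_one (hD : ∀ i, 0 < D i)
    (hlex : LexOptimal (polyA (fS G D)) D r) :
    ∑ i ∈ nbrs G (level D r 1), D i = v D r 1 * ∑ i ∈ level D r 1, D i :=
  (hlex.isTight_level_one hD).symm.trans (sum_level hD 1)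

theorem LexOptimal.sum_coNbrs_level_numLevels
    (hniso : ∀ i, (G.neighborFinset i).Nonempty) (hD : ∀ i, 0 < D i)
    (hlex : LexOptimal (polyA (fS G D)) D r) :
    ∑ i ∈ coNbrs G (level D r (numLevels D r)), D i =
      v D r (numLevels D r) * ∑ i ∈ level D r (numLevels D r), D i :=
  ((hlex.isTight_compl_level_numLevels hD).sum_eq_sum_coNbrs (hlex.sum_eq_sum hniso hD)).symm.trans
    (sum_level hD _)

theorem LexOptimal.v_one_mul_v_numLevels [Nonempty V]
    (hniso : ∀ i, (G.neighborFinset i).Nonempty) (hD : ∀ i, 0 < D i)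
    (hlex : LexOptimal (polyA (fS G D)) D r) : v D r 1 * v D r (numLevels D r) = 1 := by
  set a := v D r 1
  set b := v D r (numLevels D r)
  set B := level D r 1
  set T := level D r (numLevels D r)
  have hD0 : ∀ i, 0 ≤ D i := fun i => (hD i).le
  have hB : 0 < ∑ i ∈ B, D i := sum_pos (fun i _ => hD i) level_one_nonempty
  have hT : 0 < ∑ i ∈ T, D i := sum_pos (fun i _ => hD i) level_numLevels_nonempty
  refine le_antisymm ((mul_le_iff_le_one_left hT).1 ?_) ((le_mul_iff_one_le_left hB).1 ?_)
  · calc a * b * ∑ i ∈ T, D i = a * ∑ i ∈ coNbrs G T, D i := by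
          rw [hlex.sum_coNbrs_level_numLevels hniso hD, mul_assoc]
      _ ≤ ∑ i ∈ coNbrs G T, r i := mul_sum_le_sum_of_le_ratio hD fun i _ => v_one_le_ratio i
      _ ≤ ∑ i ∈ T, D i := sum_coNbrs_le hD0 hlex.1 T
  · calc ∑ i ∈ B, D i ≤ ∑ i ∈ nbrs G B, r i :=
          sum_le_sum_nbrs hD0 hlex.1 (hlex.sum_eq_sum hniso hD) B
      _ ≤ b * ∑ i ∈ nbrs G B, D i :=
          sum_le_mul_sum_of_ratio_le hD fun i _ => ratio_le_v_numLevels i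
      _ = a * b * ∑ i ∈ B, D i := by
          rw [hlex.sum_nbrs_level_one hD]; ring

theorem LexOptimal.nbrs_level_one_subset [Nonempty V]
    (hniso : ∀ i, (G.neighborFinset i).Nonempty) (hD : ∀ i, 0 < D i)
    (hlex : LexOptimal (polyA (fS G D)) D r) :
    nbrs G (level D r 1) ⊆ level D r (numLevels D r) := by
  have hsum : v D r (numLevels D r) * ∑ i ∈ nbrs G (level D r 1), D i ≤
      ∑ i ∈ nbrs G (level D r 1), r i := by
    rw [hlex.sum_nbrs_level_one hD, ← mul_assoc, mul_comm (v D r _),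
      hlex.v_one_mul_v_numLevels hniso hD, one_mul]
    exact sum_le_sum_nbrs (fun i => (hD i).le) hlex.1 (hlex.sum_eq_sum hniso hD) _
  exact fun i hi => mem_level.2
    (ratio_eq_of_ratio_le_of_mul_sum_le hD (fun i _ => ratio_le_v_numLevels i) hsum i hi)

theorem LexOptimal.coNbrs_level_numLevels_subset [Nonempty V]
    (hniso : ∀ i, (G.neighborFinset i).Nonempty) (hD : ∀ i, 0 < D i)
    (hlex : LexOptimal (polyA (fS G D)) D r) :
    coNbrs G (level D r (numLevels D r)) ⊆ level D r 1 := by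
  have hsum : ∑ i ∈ coNbrs G (level D r (numLevels D r)), r i ≤
      v D r 1 * ∑ i ∈ coNbrs G (level D r (numLevels D r)), D i := by
    rw [hlex.sum_coNbrs_level_numLevels hniso hD, ← mul_assoc,
      hlex.v_one_mul_v_numLevels hniso hD, one_mul]
    exact sum_coNbrs_le (fun i => (hD i).le) hlex.1 _
  exact fun i hi => mem_level.2
    (ratio_eq_of_le_ratio_of_sum_le_mul hD (fun i _ => v_one_le_ratio i) hsum i hi)

theorem LexOptimal.level_numLevels_eq_nbrs [Nonempty V]
    (hniso : ∀ i, (G.neighborFinset i).Nonempty) (hD : ∀ i, 0 < D i)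
    (hlex : LexOptimal (polyA (fS G D)) D r) :
    level D r (numLevels D r) = nbrs G (level D r 1) := by
  refine (eq_of_subset_of_sum_le hD (hlex.nbrs_level_one_subset hniso hD) ?_).symm
  calc ∑ i ∈ level D r (numLevels D r), D i
      = v D r 1 * ∑ i ∈ coNbrs G (level D r (numLevels D r)), D i := by
        rw [hlex.sum_coNbrs_level_numLevels hniso hD, ← mul_assoc,
          hlex.v_one_mul_v_numLevels hniso hD, one_mul]
    _ ≤ v D r 1 * ∑ i ∈ level D r 1, D i :=
        mul_le_mul_of_nonneg_left (sum_le_sum_of_subset_of_nonneg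
          (hlex.coNbrs_level_numLevels_subset hniso hD) fun i _ _ => (hD i).le)
          (v_one_nonneg hD hlex.1.1)
    _ = ∑ i ∈ nbrs G (level D r 1), D i := (hlex.sum_nbrs_level_one hD).symm

end Graph

theorem lexopt_top_bottom_levels_general {V : Type*} [Fintype V] [DecidableEq V]
    (G : SimpleGraph V) [DecidableRel G.Adj]
    (hniso : ∀ i, (G.neighborFinset i).Nonempty)
    (D : V → ℝ) (hD : ∀ i, 0 < D i)
    (r : V → ℝ) (hlex : LexOptimal (polyA (fS G D)) D r)
    (hK : 2 ≤ numLevels D r) :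
    (∀ i ∈ level D r 1, ∀ j ∈ level D r 1, ¬ G.Adj i j) ∧
    level D r (numLevels D r) = nbrs G (level D r 1) ∧
    v D r 1 * v D r (numLevels D r) = 1 ∧
    ∑ i ∈ level D r 1, r i = ∑ i ∈ level D r (numLevels D r), D i := by
  have := nonempty_of_two_le_numLevels hK
  have hTB := hlex.level_numLevels_eq_nbrs hniso hD
  refine ⟨fun i hi j hj hij => ?_, hTB, hlex.v_one_mul_v_numLevels hniso hD, ?_⟩
  · have hjT : j ∈ level D r (numLevels D r) := hTB ▸ mem_nbrs.2 ⟨i, hi, hij⟩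
    exact (v_one_lt_v_numLevels hK).ne ((mem_level.1 hj).symm.trans (mem_level.1 hjT))
  · rw [hlex.isTight_level_one hD, fS, hTB]

/-- if `r ∈ A` is lex-optimal and `K(r) ≥ 2`, then `L_1(r)` is an independent set
in `G`, `L_{K(r)}(r)` is exactly the set of all neighbors of nodes of `L_1(r)` in `G`,
`v_1(r) · v_{K(r)}(r) = 1`, and `Σ_{i∈L_1} r_i = Σ_{i∈L_K} D_i`. -/
theorem lexopt_top_bottom_levels {V : Type*} [Fintype V] [DecidableEq V]
    (G : SimpleGraph V) [DecidableRel G.Adj]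
    (hconn : G.Connected) (hniso : ∀ i, (G.neighborFinset i).Nonempty)
    (D : V → ℝ) (hD : ∀ i, 0 < D i)
    (r : V → ℝ) (hlex : LexOptimal (polyA (fS G D)) D r)
    (hK : 2 ≤ numLevels D r) :
    (∀ i ∈ level D r 1, ∀ j ∈ level D r 1, ¬ G.Adj i j) ∧
    level D r (numLevels D r) = nbrs G (level D r 1) ∧
    v D r 1 * v D r (numLevels D r) = 1 ∧
    ∑ i ∈ level D r 1, r i = ∑ i ∈ level D r (numLevels D r), D i :=
  lexopt_top_bottom_levels_general G hniso D hD r hlex hK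

end SharingEcon
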